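/- arXiv:1202.1223 — 2 statements merged into one kernel-verified Lean document; each statement's English description precedes it below -/
import Mathlib

section
/- Among all rooted phylogenetic trees with n leaves, the maximum value of the total cophenetic index Φ is binom(n,3), and it is attained exactly by the rooted caterpillars. -/
/-- Rooted trees with natural-number-labeled leaves. -/
inductive PTree where
  | leaf : ℕ → PTree
  | node : List PTree → PTree

namespace PTree

/-- The list of leaf labels of a tree, in left-to-right order. -/
def leaves : PTree → List ℕ
  | .leaf i => [i]
  | .node ts => ts.attach.flatMap (fun t => leaves t.1)
decreasing_by have := List.sizeOf_lt_of_mem t.2; simp_wf; omega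

/-- The depth (number of arcs from the root) of the leaf labeled `i`. -/
def leafDepth : PTree → ℕ → ℕ
  | .leaf _, _ => 0
  | .node ts, i =>
      (ts.attach.map (fun t => if i ∈ leaves t.1 then 1 + leafDepth t.1 i else 0)).sum
decreasing_by have := List.sizeOf_lt_of_mem t.2; simp_wf; omega

/-- The cophenetic value of `i` and `j`: the depth of their lowest common ancestor. -/
def cophen : PTree → ℕ → ℕ → ℕ
  | .leaf _, _, _ => 0
  | .node ts, i, j =>
      (ts.attach.map (fun t =>
        if i ∈ leaves t.1 ∧ j ∈ leaves t.1 then 1 + cophen t.1 i j else 0)).sum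
decreasing_by have := List.sizeOf_lt_of_mem t.2; simp_wf; omega

/-- The nodal distance between the leaves labeled `i` and `j`:
the number of edges on the undirected path joining them. -/
def ndist : PTree → ℕ → ℕ → ℕ
  | .leaf _, _, _ => 0
  | .node ts, i, j =>
      (ts.attach.map (fun t =>
        if i ∈ leaves t.1 ∧ j ∈ leaves t.1 then ndist t.1 i j
        else if i ∈ leaves t.1 then 1 + leafDepth t.1 i
        else if j ∈ leaves t.1 then 1 + leafDepth t.1 j
        else 0)).sum
decreasing_by have := List.sizeOf_lt_of_mem t.2; simp_wf; omega

/-- The list of the numbers of descendant leaves of each internal node,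
with the root (if internal) first. -/
def allInternalSizes : PTree → List ℕ
  | .leaf _ => []
  | .node ts => (PTree.node ts).leaves.length :: ts.attach.flatMap (fun t => allInternalSizes t.1)
decreasing_by have := List.sizeOf_lt_of_mem t.2; simp_wf; omega

/-- The total cophenetic index: sum of cophenetic values over pairs of distinct leaves. -/
def Phi (T : PTree) : ℕ :=
  ∑ i ∈ T.leaves.toFinset, ∑ j ∈ T.leaves.toFinset, if i < j then cophen T i j else 0

/-- The Sackin index: the sum of the depths of the leaves. -/
def Sackin (T : PTree) : ℕ := ∑ i ∈ T.leaves.toFinset, leafDepth T i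

/-- The total area: the sum of the nodal distances between pairs of distinct leaves. -/
def Darea (T : PTree) : ℕ :=
  ∑ i ∈ T.leaves.toFinset, ∑ j ∈ T.leaves.toFinset, if i < j then ndist T i j else 0

/-- A tree is binary when every internal node has exactly two children. -/
def IsBinary : PTree → Prop
  | .leaf _ => True
  | .node ts => ts.length = 2 ∧ ∀ t ∈ ts.attach, IsBinary t.1
decreasing_by have := List.sizeOf_lt_of_mem t.2; simp_wf; omega

/-- A tree is proper when every internal node has at least two children. -/
def Proper : PTree → Prop
  | .leaf _ => True
  | .node ts => 2 ≤ ts.length ∧ ∀ t ∈ ts.attach, Proper t.1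
decreasing_by have := List.sizeOf_lt_of_mem t.2; simp_wf; omega

/-- `T` is a phylogenetic tree with `n` leaves: a proper rooted tree whose leaves are
bijectively labeled by `{1, …, n}`. -/
def IsPhylo (n : ℕ) (T : PTree) : Prop :=
  Proper T ∧ T.leaves.Nodup ∧ T.leaves.toFinset = Finset.Icc 1 n

/-- A rooted caterpillar: a binary tree all of whose internal nodes have a leaf child. -/
def IsCaterpillar : PTree → Prop
  | .leaf _ => True
  | .node ts => ts.length = 2 ∧ (∃ t ∈ ts, ∃ i, t = PTree.leaf i) ∧
      ∀ t ∈ ts.attach, IsCaterpillar t.1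
decreasing_by have := List.sizeOf_lt_of_mem t.2; simp_wf; omega

/-- A binary tree is maximally balanced when every internal node is balanced, i.e. the
numbers of descendant leaves of its two children differ by at most one. -/
def MaxBalanced : PTree → Prop
  | .leaf _ => True
  | .node [a, b] =>
      |(a.leaves.length : ℤ) - (b.leaves.length : ℤ)| ≤ 1 ∧ MaxBalanced a ∧ MaxBalanced b
  | .node _ => False

/-- Canonical representative of an isomorphism class of binary trees: at every internal node
the subtree containing the smallest leaf label comes first. -/
def Canonical : PTree → Prop
  | .leaf _ => True
  | .node [a, b] => a.leaves.minimum < b.leaves.minimum ∧ Canonical a ∧ Canonical b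
  | .node _ => False

/-- The rooted caterpillar with `n` leaves labeled `1, …, n` (for `n ≥ 1`). -/
def caterpillar : ℕ → PTree
  | 0 => .leaf 1
  | 1 => .leaf 1
  | n + 2 => .node [caterpillar (n + 1), .leaf (n + 2)]

/-- `Replace T t₀ t₀' T'` holds when `T'` is obtained from `T` by replacing the subtree `t₀`
of `T` rooted at some node by the tree `t₀'`. -/
inductive Replace : PTree → PTree → PTree → PTree → Prop where
  | here (t₀ t₀' : PTree) : Replace t₀ t₀ t₀' t₀'
  | child (l r : List PTree) (a b t₀ t₀' : PTree) :
      Replace a t₀ t₀' b → Replace (.node (l ++ a :: r)) t₀ t₀' (.node (l ++ b :: r))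

/-- The probability of a binary phylogenetic tree with `n` leaves under the Yule model. -/
noncomputable def yuleP (n : ℕ) (T : PTree) : ℝ :=
  (2 ^ (n - 1) / (n.factorial : ℝ)) *
    ((allInternalSizes T).map (fun k => ((k : ℝ) - 1)⁻¹)).prod

end PTree

/-! Splitting the cophenetic value of a pair at the root gives the recursion
`Φ(T) = ∑ₜ (C(|t|, 2) + Φ(t))` over the children `t` of the root, `|t|` being the number of
leaves of `t`. Inductively each child contributes at most `C(|t|, 2) + C(|t|, 3) = C(|t| + 1, 3)`,
and `∑ₖ C(mₖ + 1, 3) ≤ C(∑ₖ mₖ, 3)` for at least two positive `mₖ`, with equality exactly for two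
parts one of which is `1`. So equality forces a binary root with a leaf child and caterpillar
children. -/

open Finset

theorem six_mul_choose_three (n : ℕ) : 6 * (n + 2).choose 3 = (n + 2) * (n + 1) * n := by
  have h := Nat.descFactorial_eq_factorial_mul_choose (n + 2) 3
  simp [Nat.descFactorial, Nat.factorial] at h
  linarith

theorem two_mul_choose_three_add (a b : ℕ) :
    2 * ((a + 2).choose 3 + (b + 2).choose 3) + a * b * (a + b + 2) =
      2 * (a + b + 2).choose 3 := by
  have ha := six_mul_choose_three a
  have hb := six_mul_choose_three b
  have hab := six_mul_choose_three (a + b)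
  nlinarith

theorem choose_succ_three_add_le {a b : ℕ} (ha : 0 < a) (hb : 0 < b) :
    (a + 1).choose 3 + (b + 1).choose 3 ≤ (a + b).choose 3 ∧
      ((a + 1).choose 3 + (b + 1).choose 3 = (a + b).choose 3 ↔ a = 1 ∨ b = 1) := by
  obtain ⟨a, rfl⟩ : ∃ a', a = a' + 1 := ⟨a - 1, by omega⟩
  obtain ⟨b, rfl⟩ : ∃ b', b = b' + 1 := ⟨b - 1, by omega⟩
  have h := two_mul_choose_three_add a b
  rw [show a + 1 + 1 = a + 2 from rfl, show b + 1 + 1 = b + 2 from rfl,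
    show a + 1 + (b + 1) = a + b + 2 by ring]
  refine ⟨by omega, ?_⟩
  have : a * b * (a + b + 2) = 0 ↔ a = 0 ∨ b = 0 := by simp
  omega

theorem sum_map_choose_succ_three_le (l : List ℕ) (hl : ∀ m ∈ l, 0 < m) (hlen : 2 ≤ l.length) :
    (l.map fun m => (m + 1).choose 3).sum ≤ l.sum.choose 3 ∧
      ((l.map fun m => (m + 1).choose 3).sum = l.sum.choose 3 ↔ l.length = 2 ∧ 1 ∈ l) := by
  induction l with
  | nil => simp at hlen
  | cons a l ih =>
    simp only [List.mem_cons, forall_eq_or_imp] at hl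
    simp only [List.map_cons, List.sum_cons, List.length_cons, List.mem_cons]
    match l, ih with
    | [], _ => simp at hlen
    | [b], _ =>
      have hb : 0 < b := hl.2 b (by simp)
      simpa [eq_comm] using choose_succ_three_add_le hl.1 hb
    | b :: c :: l, ih =>
      obtain ⟨ih, -⟩ := ih hl.2 (by simp)
      have hs : 2 ≤ (b :: c :: l).sum := by
        have := List.length_le_sum_of_one_le (b :: c :: l) hl.2
        simp only [List.length_cons] at this
        omega
      set s := (b :: c :: l).sum
      have hstep := (choose_succ_three_add_le hl.1 (by omega : 0 < s)).1
      have hlt : s.choose 3 < (s + 1).choose 3 := by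
        have := Nat.choose_pos hs
        have : (s + 1).choose 3 = s.choose 2 + s.choose 3 := Nat.choose_succ_succ s 2
        omega
      refine ⟨by omega, fun h => absurd h (by omega), fun h => absurd h.1 (by simp)⟩

theorem sum_sum_ite_lt_one {α : Type*} [LinearOrder α] (s : Finset α) :
    ∑ i ∈ s, ∑ j ∈ s, (if i < j then 1 else 0 : ℕ) = (#s).choose 2 := by
  rw [← card_product_filter_lt, card_filter, sum_product]

theorem sum_list_map_sum_comm {ι κ M : Type*} [AddCommMonoid M] (s : Finset ι) (l : List κ)
    (f : ι → κ → M) : ∑ i ∈ s, (l.map (f i)).sum = (l.map fun k => ∑ i ∈ s, f i k).sum := by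
  induction l with
  | nil => simp
  | cons k l ih => simp [sum_add_distrib, ih]

theorem List.sum_map_eq_sum_map_iff_of_le {ι M : Type*} [AddCommMonoid M] [PartialOrder M]
    [IsOrderedCancelAddMonoid M] {l : List ι} {f g : ι → M} (h : ∀ i ∈ l, f i ≤ g i) :
    (l.map f).sum = (l.map g).sum ↔ ∀ i ∈ l, f i = g i := by
  refine ⟨fun heq => ?_, fun hfg => congrArg List.sum (List.map_congr_left hfg)⟩
  by_contra! ⟨i, hi, hne⟩
  exact (List.sum_lt_sum f g h ⟨i, hi, lt_of_le_of_ne (h i hi) hne⟩).ne heq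

namespace PTree

theorem induction {motive : PTree → Prop} (leaf : ∀ i, motive (.leaf i))
    (node : ∀ ts, (∀ t ∈ ts, motive t) → motive (.node ts)) : ∀ T, motive T
  | .leaf i => leaf i
  | .node ts => node ts fun t _ => induction leaf node t
decreasing_by have := List.sizeOf_lt_of_mem ‹t ∈ ts›; simp_wf; omega

theorem leaves_node (ts : List PTree) : (node ts).leaves = ts.flatMap leaves := by
  rw [leaves]; simp

theorem cophen_node (ts : List PTree) (i j : ℕ) : cophen (node ts) i j =
    (ts.map fun t => if i ∈ t.leaves ∧ j ∈ t.leaves then 1 + cophen t i j else 0).sum := by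
  rw [cophen]; simp

theorem proper_node (ts : List PTree) :
    Proper (node ts) ↔ 2 ≤ ts.length ∧ ∀ t ∈ ts, Proper t := by
  rw [Proper]; simp

theorem isCaterpillar_node (ts : List PTree) : IsCaterpillar (node ts) ↔
    ts.length = 2 ∧ (∃ t ∈ ts, ∃ i, t = leaf i) ∧ ∀ t ∈ ts, IsCaterpillar t := by
  rw [IsCaterpillar]; simp

theorem Phi_node (ts : List PTree) :
    Phi (node ts) = (ts.map fun t => (#t.leaves.toFinset).choose 2 + Phi t).sum := by
  set L := (node ts).leaves.toFinset
  let F (t : PTree) (i j : ℕ) : ℕ :=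
    if i ∈ t.leaves ∧ j ∈ t.leaves then (if i < j then 1 + cophen t i j else 0) else 0
  have hF (t : PTree) (ht : t ∈ ts) :
      ∑ i ∈ L, ∑ j ∈ L, F t i j = (#t.leaves.toFinset).choose 2 + Phi t := by
    have hsub : t.leaves.toFinset ⊆ L := by
      intro i hi
      simp only [L, leaves_node, List.mem_toFinset, List.mem_flatMap] at hi ⊢
      exact ⟨t, ht, hi⟩
    rw [Phi, ← sum_sum_ite_lt_one, ← sum_add_distrib]
    rw [← sum_subset hsub fun i _ hi => sum_eq_zero fun j _ => by simp_all [F]]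
    refine sum_congr rfl fun i hi => ?_
    rw [← sum_add_distrib, ← sum_subset hsub fun j _ hj => by simp_all [F]]
    refine sum_congr rfl fun j hj => ?_
    simp only [List.mem_toFinset] at hi hj
    simp only [F, hi, hj, and_self, if_true]
    split_ifs <;> omega
  calc Phi (node ts) = ∑ i ∈ L, ∑ j ∈ L, (ts.map fun t => F t i j).sum := by
        refine sum_congr rfl fun i _ => sum_congr rfl fun j _ => ?_
        rw [cophen_node]
        split_ifs with hij <;> simp [F, hij]
    _ = (ts.map fun t => ∑ i ∈ L, ∑ j ∈ L, F t i j).sum := by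
        simp only [sum_list_map_sum_comm]
    _ = _ := congrArg List.sum (List.map_congr_left hF)

theorem length_leaves_node (ts : List PTree) :
    (node ts).leaves.length = (ts.map fun t => t.leaves.length).sum := by
  rw [leaves_node, List.length_flatMap]

theorem length_leaves_pos {T : PTree} (hT : Proper T) : 0 < T.leaves.length := by
  induction T using PTree.induction with
  | leaf i => simp [leaves]
  | node ts ih =>
    obtain ⟨hlen, hch⟩ := (proper_node ts).1 hT
    obtain ⟨t, ht⟩ := List.exists_mem_of_length_pos (by omega : 0 < ts.length)
    rw [length_leaves_node]
    exact lt_of_lt_of_le (ih t ht (hch t ht))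
      (List.le_sum_of_mem (List.mem_map_of_mem (f := fun t => t.leaves.length) ht))

theorem length_leaves_eq_one_iff {T : PTree} (hT : Proper T) :
    T.leaves.length = 1 ↔ ∃ i, T = leaf i := by
  cases T with
  | leaf i => simp [leaves]
  | node ts =>
    obtain ⟨hlen, hch⟩ := (proper_node ts).1 hT
    have := List.length_le_sum_of_one_le (ts.map fun t => t.leaves.length) (by
      simpa [Nat.succ_le_iff] using fun t ht => length_leaves_pos (hch t ht))
    rw [List.length_map] at this
    simp only [length_leaves_node, reduceCtorEq, exists_false, iff_false]
    omega

theorem Phi_le_and_eq_iff_isCaterpillar {T : PTree} (hP : Proper T) (hnd : T.leaves.Nodup) :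
    Phi T ≤ T.leaves.length.choose 3 ∧
      (Phi T = T.leaves.length.choose 3 ↔ IsCaterpillar T) := by
  induction T using PTree.induction with
  | leaf i => simp [Phi, leaves, IsCaterpillar, Nat.choose_eq_zero_of_lt]
  | node ts ih =>
    obtain ⟨hlen, hchP⟩ := (proper_node ts).1 hP
    have hchnd : ∀ t ∈ ts, t.leaves.Nodup := (List.nodup_flatMap.1 (leaves_node ts ▸ hnd)).1
    replace ih t (ht : t ∈ ts) := ih t ht (hchP t ht) (hchnd t ht)
    have hPhi : Phi (node ts) = (ts.map fun t => t.leaves.length.choose 2 + Phi t).sum := by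
      rw [Phi_node]
      exact congrArg List.sum <| List.map_congr_left fun t ht => by
        rw [List.toFinset_card_of_nodup (hchnd t ht)]
    have hchild : ∀ t ∈ ts, t.leaves.length.choose 2 + Phi t ≤ (t.leaves.length + 1).choose 3 :=
      fun t ht => by rw [Nat.choose_succ_succ _ 2]; exact Nat.add_le_add_left (ih t ht).1 _
    have hsizes := sum_map_choose_succ_three_le (ts.map fun t => t.leaves.length)
      (by simpa using fun t ht => length_leaves_pos (hchP t ht)) (by simpa using hlen)
    simp only [List.map_map, Function.comp_def] at hsizes
    have hbound := List.sum_le_sum hchild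
    rw [length_leaves_node, hPhi]
    refine ⟨hbound.trans hsizes.1, ?_⟩
    have hchild_eq : ∀ t ∈ ts, (t.leaves.length.choose 2 + Phi t = (t.leaves.length + 1).choose 3
        ↔ IsCaterpillar t) := fun t ht => by
      rw [Nat.choose_succ_succ _ 2, Nat.add_left_cancel_iff, (ih t ht).2]
    have hroot_eq : (ts.map fun t => t.leaves.length).length = 2 ∧
        1 ∈ ts.map (fun t => t.leaves.length) ↔ ts.length = 2 ∧ ∃ t ∈ ts, ∃ i, t = leaf i := by
      simp only [List.length_map, List.mem_map]
      exact and_congr_right fun _ => exists_congr fun t =>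
        and_congr_right fun ht => length_leaves_eq_one_iff (hchP t ht)
    rw [isCaterpillar_node, ← and_assoc, ← hroot_eq, ← hsizes.2, ← forall₂_congr hchild_eq,
      ← List.sum_map_eq_sum_map_iff_of_le hchild]
    exact ⟨fun h => ⟨by omega, by omega⟩, fun ⟨h₁, h₂⟩ => h₂.trans h₁⟩

end PTree

theorem phi_max_iff_caterpillar (n : ℕ) (T : PTree) (hT : PTree.IsPhylo n T) :
    PTree.Phi T ≤ Nat.choose n 3 ∧
    (PTree.Phi T = Nat.choose n 3 ↔ PTree.IsCaterpillar T) := by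
  obtain ⟨hP, hnd, hset⟩ := hT
  have hn : T.leaves.length = n := by
    rw [← List.toFinset_card_of_nodup hnd, hset, Nat.card_Icc, Nat.add_sub_cancel]
  exact hn ▸ PTree.Phi_le_and_eq_iff_isCaterpillar hP hnd
end

section
/- For every n ≥ m ≥ 1, the number of ordered m-forests of binary phylogenetic trees on a leaf set of size n (sequences (T_1,...,T_m) of binary phylogenetic trees on pairwise disjoint nonempty leaf sets whose union is the n-set) equals (2n−m−1)! · m / ((n−m)! · 2^{n−m}). -/
/-!
Remove the largest label `n + 1` from an ordered forest on `{1, …, n + 1}`: either it forms a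
singleton tree, which disappears, or its parent is suppressed inside a larger tree. Conversely,
a forest of `m` binary trees on `n` labels extends in `m + 1` ways by inserting the singleton tree
`n + 1` into the sequence, and in `2n - m` ways by grafting `n + 1` onto one of the `2n - m` edges
of its trees (the edge above each root included). Hence the number `f n m` of forests satisfies
`f (n + 1) (m + 1) = (2n - m - 1) f n (m + 1) + (m + 1) f n m`, and so does the closed form.
A tree is counted through its canonical representative (at every node the child with the smaller
minimal label comes first); grafting the largest label keeps a tree canonical.
-/

namespace List

theorem minimum_cons_of_exists_le {α : Type*} [LinearOrder α] {x : α} {l : List α}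
    (h : ∃ y ∈ l, y ≤ x) : (x :: l).minimum = l.minimum := by
  obtain ⟨y, hy, hyx⟩ := h
  rw [minimum_cons, min_eq_right]
  exact (minimum_le_of_mem' hy).trans (WithTop.coe_le_coe.2 hyx)

theorem minimum_lt_of_forall_lt {α : Type*} [LinearOrder α] {l : List α} {x : α} (hne : l ≠ [])
    (hx : ∀ y ∈ l, y < x) : l.minimum < x := by
  obtain ⟨y, hy⟩ := exists_mem_of_ne_nil _ hne
  exact (minimum_le_of_mem' hy).trans_lt (WithTop.coe_lt_coe.2 (hx y hy))

theorem nodup_flatMap_of_leftInverse {α β : Type*} {l : List α} {f : α → List β} (g : β → α)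
    (hl : l.Nodup) (hf : ∀ a ∈ l, (f a).Nodup) (hg : ∀ a ∈ l, ∀ b ∈ f a, g b = a) :
    (l.flatMap f).Nodup := by
  refine nodup_flatMap.2 ⟨hf, hl.pairwise_of_forall_ne fun a ha a' ha' hne => ?_⟩
  exact disjoint_left.2 fun b hb hb' => hne ((hg a ha b hb).symm.trans (hg a' ha' b hb'))

theorem mem_permutations'Aux_iff {α : Type*} {x : α} {l l' : List α} :
    l' ∈ permutations'Aux x l ↔ ∃ A B, l = A ++ B ∧ l' = A ++ x :: B := by
  induction l generalizing l' with
  | nil => simp [permutations'Aux, eq_comm]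
  | cons y l ih =>
    simp only [permutations'Aux, mem_cons, mem_map, ih]
    constructor
    · rintro (rfl | ⟨_, ⟨A, B, rfl, rfl⟩, rfl⟩)
      · exact ⟨[], y :: l, rfl, rfl⟩
      · exact ⟨y :: A, B, rfl, rfl⟩
    · rintro ⟨_ | ⟨z, A⟩, B, h, rfl⟩
      · exact .inl (by rw [h, nil_append, nil_append])
      · obtain ⟨rfl, rfl⟩ := cons_eq_cons.1 h
        exact .inr ⟨A ++ x :: B, ⟨A, B, rfl, rfl⟩, rfl⟩

theorem erase_of_mem_permutations'Aux {α : Type*} [DecidableEq α] {x : α} {l l' : List α}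
    (hx : x ∉ l) (h : l' ∈ permutations'Aux x l) : l'.erase x = l := by
  obtain ⟨A, B, rfl, rfl⟩ := mem_permutations'Aux_iff.1 h
  rw [erase_append_right _ fun hA => hx (mem_append_left B hA), erase_cons_head]

theorem perm_range'_succ_iff {n : ℕ} {l l₀ : List ℕ} (h : l.Perm ((n + 1) :: l₀)) :
    l.Perm (range' 1 (n + 1)) ↔ l₀.Perm (range' 1 n) := by
  have hr : (range' 1 (n + 1)).Perm ((n + 1) :: range' 1 n) := by
    rw [range'_concat, Nat.one_mul, Nat.add_comm]
    exact perm_append_singleton _ _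
  exact ⟨fun h' => (perm_cons _).1 (h.symm.trans (h'.trans hr)),
    fun h' => h.trans (((perm_cons _).2 h').trans hr.symm)⟩

theorem nodup_and_toFinset_eq_Icc_iff {n : ℕ} {l : List ℕ} :
    l.Nodup ∧ l.toFinset = Finset.Icc 1 n ↔ l.Perm (range' 1 n) := by
  constructor
  · rintro ⟨hl, h⟩
    refine (perm_ext_iff_of_nodup hl nodup_range').2 fun a => ?_
    rw [← mem_toFinset, h, mem_range'_1, Finset.mem_Icc]
    omega
  · intro h
    refine ⟨h.nodup_iff.2 nodup_range', Finset.ext fun a => ?_⟩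
    rw [mem_toFinset, h.mem_iff, mem_range'_1, Finset.mem_Icc]
    omega

end List

theorem mul_factorial_mul_two_pow_eq_of_recurrence (g : ℕ → ℕ → ℕ) (h00 : g 0 0 = 1)
    (h0s : ∀ a, g 0 (a + 1) = g 0 a * (2 * a + 1))
    (hs0 : ∀ m, g (m + 1) 0 = g m 0 * (m + 2))
    (hss : ∀ m a, g (m + 1) (a + 1) = g (m + 1) a * (m + 2 * a + 2) + g m (a + 1) * (m + 2))
    (m a : ℕ) : g m a * (a.factorial * 2 ^ a) = (m + 2 * a).factorial * (m + 1) := by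
  induction m generalizing a with
  | zero =>
    induction a with
    | zero => simp [h00]
    | succ a ih =>
      rw [Nat.zero_add] at ih ⊢
      rw [h0s, show 2 * (a + 1) = 2 * a + 1 + 1 by ring, Nat.factorial_succ (2 * a + 1),
        Nat.factorial_succ (2 * a), Nat.factorial_succ a, pow_succ]
      linear_combination (2 * a + 2) * (2 * a + 1) * ih
  | succ m ihm =>
    induction a with
    | zero =>
      have h := ihm 0
      simp only [mul_zero, add_zero, Nat.factorial_zero, pow_zero, mul_one] at h ⊢
      rw [hs0, Nat.factorial_succ]
      linear_combination (m + 2) * h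
    | succ a iha =>
      have ho := ihm (a + 1)
      rw [show m + 2 * (a + 1) = m + 2 * a + 1 + 1 by ring, Nat.factorial_succ (m + 2 * a + 1),
        Nat.factorial_succ a, pow_succ] at ho
      rw [show m + 1 + 2 * a = m + 2 * a + 1 by ring] at iha
      rw [hss, show m + 1 + 2 * (a + 1) = m + 2 * a + 1 + 1 + 1 by ring,
        Nat.factorial_succ (m + 2 * a + 1 + 1), Nat.factorial_succ (m + 2 * a + 1),
        Nat.factorial_succ a, pow_succ]
      linear_combination (2 * (a + 1) * (m + 2 * a + 2)) * iha + (m + 2) * ho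

namespace PTree

@[simp] theorem leaves_leaf (i : ℕ) : (leaf i).leaves = [i] := by simp [leaves]

@[simp] theorem leaves_pair (a b : PTree) : (node [a, b]).leaves = a.leaves ++ b.leaves := by
  simp [leaves]

@[simp] theorem isBinary_leaf (i : ℕ) : IsBinary (leaf i) := by simp [IsBinary]

@[simp] theorem isBinary_pair {a b : PTree} : IsBinary (node [a, b]) ↔ IsBinary a ∧ IsBinary b := by
  simp [IsBinary]

@[simp] theorem canonical_leaf (i : ℕ) : Canonical (leaf i) := by simp [Canonical]

theorem canonical_pair {a b : PTree} :
    Canonical (node [a, b]) ↔ a.leaves.minimum < b.leaves.minimum ∧ Canonical a ∧ Canonical b := by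
  rw [Canonical]

theorem Canonical.isBinary {T : PTree} (hT : Canonical T) : IsBinary T := by
  induction T using Canonical.induct with
  | case1 i => simp
  | case2 a b iha ihb =>
    obtain ⟨-, ha, hb⟩ := canonical_pair.1 hT
    exact isBinary_pair.2 ⟨iha ha, ihb hb⟩
  | case3 ts _ => simp [Canonical] at hT

theorem IsBinary.exists_eq_leaf {T : PTree} (hT : IsBinary T)
    (hpair : ∀ a b, T = node [a, b] → False) : ∃ i, T = leaf i := by
  cases T with
  | leaf i => exact ⟨i, rfl⟩
  | node ts =>
    rw [IsBinary] at hT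
    obtain ⟨a, b, rfl⟩ := List.length_eq_two.1 hT.1
    exact (hpair a b rfl).elim

theorem Canonical.leaves_ne_nil {T : PTree} (hT : Canonical T) : T.leaves ≠ [] := by
  induction T using Canonical.induct with
  | case1 i => simp
  | case2 a b iha ihb => simp [iha (canonical_pair.1 hT).2.1]
  | case3 ts _ => simp [Canonical] at hT

def grafts (x : ℕ) : PTree → List PTree
  | node [a, b] =>
      node [node [a, b], leaf x] ::
        ((grafts x a).map (node [·, b]) ++ (grafts x b).map (node [a, ·]))
  | T => [node [T, leaf x]]

theorem node_mem_grafts (x : ℕ) (T : PTree) : node [T, leaf x] ∈ grafts x T := by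
  unfold grafts
  split <;> simp

theorem exists_eq_node_of_mem_grafts {x : ℕ} {T T' : PTree} (h : T' ∈ grafts x T) :
    ∃ a b, T' = node [a, b] := by
  induction T using grafts.induct with
  | case1 a b iha ihb =>
    simp only [grafts, List.mem_cons, List.mem_append, List.mem_map] at h
    rcases h with rfl | ⟨_, -, rfl⟩ | ⟨_, -, rfl⟩ <;> exact ⟨_, _, rfl⟩
  | case2 T hT =>
    rw [grafts.eq_2 x T hT, List.mem_singleton] at h
    exact ⟨T, leaf x, h⟩

theorem leaves_perm_of_mem_grafts {x : ℕ} {T T' : PTree} (h : T' ∈ grafts x T) :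
    T'.leaves.Perm (x :: T.leaves) := by
  induction T using grafts.induct generalizing T' with
  | case1 a b iha ihb =>
    simp only [grafts, List.mem_cons, List.mem_append, List.mem_map] at h
    rcases h with rfl | ⟨a', ha', rfl⟩ | ⟨b', hb', rfl⟩
    · simpa using List.perm_append_singleton x (a.leaves ++ b.leaves)
    · simpa using (iha ha').append_right b.leaves
    · simpa using ((ihb hb').append_left a.leaves).trans List.perm_middle
  | case2 T hT =>
    rw [grafts.eq_2 x T hT, List.mem_singleton] at h
    simp [h]

theorem minimum_leaves_of_mem_grafts {x : ℕ} {T T' : PTree} (h : T' ∈ grafts x T)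
    (hne : T.leaves ≠ []) (hx : ∀ y ∈ T.leaves, y ≤ x) : T'.leaves.minimum = T.leaves.minimum := by
  obtain ⟨y, hy⟩ := List.exists_mem_of_ne_nil _ hne
  rw [(leaves_perm_of_mem_grafts h).minimum_eq, List.minimum_cons_of_exists_le ⟨y, hy, hx y hy⟩]

theorem canonical_of_mem_grafts {x : ℕ} {T T' : PTree} (h : T' ∈ grafts x T) (hT : Canonical T)
    (hx : ∀ y ∈ T.leaves, y < x) : Canonical T' := by
  induction T using grafts.induct generalizing T' with
  | case1 a b iha ihb =>
    obtain ⟨hab, ha, hb⟩ := canonical_pair.1 hT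
    have hxa : ∀ y ∈ a.leaves, y < x := fun y hy => hx y (by simp [hy])
    have hxb : ∀ y ∈ b.leaves, y < x := fun y hy => hx y (by simp [hy])
    simp only [grafts, List.mem_cons, List.mem_append, List.mem_map] at h
    rcases h with rfl | ⟨a', ha', rfl⟩ | ⟨b', hb', rfl⟩
    · refine canonical_pair.2 ⟨?_, hT, canonical_leaf x⟩
      simpa using List.minimum_lt_of_forall_lt hT.leaves_ne_nil hx
    · rw [canonical_pair,
        minimum_leaves_of_mem_grafts ha' ha.leaves_ne_nil fun y hy => (hxa y hy).le]
      exact ⟨hab, iha ha' ha hxa, hb⟩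
    · rw [canonical_pair,
        minimum_leaves_of_mem_grafts hb' hb.leaves_ne_nil fun y hy => (hxb y hy).le]
      exact ⟨hab, ha, ihb hb' hb hxb⟩
  | case2 T hpair =>
    rw [grafts.eq_2 x T hpair, List.mem_singleton] at h
    obtain ⟨i, rfl⟩ := hT.isBinary.exists_eq_leaf hpair
    simpa [h, Canonical] using hx

theorem length_grafts (x : ℕ) {T : PTree} (hT : IsBinary T) :
    (grafts x T).length + 1 = 2 * T.leaves.length := by
  induction T using grafts.induct with
  | case1 a b iha ihb =>
    obtain ⟨ha, hb⟩ := isBinary_pair.1 hT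
    have := iha ha
    have := ihb hb
    simp only [grafts, List.length_cons, List.length_append, List.length_map, leaves_pair]
    omega
  | case2 T hpair =>
    obtain ⟨i, rfl⟩ := hT.exists_eq_leaf hpair
    simp [grafts]

theorem nodup_grafts {x : ℕ} {T : PTree} (hx : x ∉ T.leaves) : (grafts x T).Nodup := by
  induction T using grafts.induct with
  | case1 a b iha ihb =>
    simp only [leaves_pair, List.mem_append, not_or] at hx
    obtain ⟨hxa, hxb⟩ := hx
    rw [grafts, List.nodup_cons, List.nodup_append]
    refine ⟨?_, (iha hxa).map fun _ _ h => by simpa using h,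
      (ihb hxb).map fun _ _ h => by simpa using h, ?_⟩
    · simp only [List.mem_append, List.mem_map, node.injEq, List.cons.injEq, and_true]
      rintro (⟨a', -, -, rfl⟩ | ⟨b', hb', -, rfl⟩)
      · exact hxb (by simp)
      · obtain ⟨c, d, h⟩ := exists_eq_node_of_mem_grafts hb'
        cases h
    · simp only [List.mem_map]
      rintro _ ⟨a', ha', rfl⟩ _ ⟨b', -, rfl⟩ hab
      simp only [node.injEq, List.cons.injEq, and_true] at hab
      exact hxa (hab.1 ▸ (leaves_perm_of_mem_grafts ha').mem_iff.2 List.mem_cons_self)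
  | case2 T hpair => simp [grafts.eq_2 x T hpair]

theorem Canonical.exists_canonical_mem_grafts {x : ℕ} {T : PTree} (hT : Canonical T)
    (hxT : x ∈ T.leaves) (hmax : ∀ y ∈ T.leaves, y ≤ x) (hne : T ≠ leaf x) :
    ∃ T₀, Canonical T₀ ∧ T ∈ grafts x T₀ := by
  induction T using Canonical.induct with
  | case1 i =>
    simp only [leaves_leaf, List.mem_singleton] at hxT
    exact (hne (hxT ▸ rfl)).elim
  | case2 a b iha ihb =>
    obtain ⟨hab, ha, hb⟩ := canonical_pair.1 hT
    simp only [leaves_pair, List.mem_append] at hxT hmax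
    have hmaxa : ∀ y ∈ a.leaves, y ≤ x := fun y hy => hmax y (.inl hy)
    have hmaxb : ∀ y ∈ b.leaves, y ≤ x := fun y hy => hmax y (.inr hy)
    have hmin {c c₀ : PTree} (hc₀ : Canonical c₀) (hc : c ∈ grafts x c₀)
        (hmaxc : ∀ y ∈ c.leaves, y ≤ x) : c.leaves.minimum = c₀.leaves.minimum :=
      minimum_leaves_of_mem_grafts hc hc₀.leaves_ne_nil fun y hy =>
        hmaxc y ((leaves_perm_of_mem_grafts hc).mem_iff.2 (List.mem_cons_of_mem x hy))
    by_cases hbx : b = leaf x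
    · exact ⟨a, ha, hbx ▸ node_mem_grafts x a⟩
    by_cases hxb : x ∈ b.leaves
    · obtain ⟨b₀, hb₀, hbb₀⟩ := ihb hb hxb hmaxb hbx
      refine ⟨node [a, b₀], canonical_pair.2 ⟨?_, ha, hb₀⟩, by simp [grafts, hbb₀]⟩
      rwa [← hmin hb₀ hbb₀ hmaxb]
    · have hax : a ≠ leaf x := by
        rintro rfl
        obtain ⟨y, hy⟩ := List.exists_mem_of_ne_nil _ hb.leaves_ne_nil
        have hbx' : b.leaves.minimum ≤ x :=
          (List.minimum_le_of_mem' hy).trans (WithTop.coe_le_coe.2 (hmaxb y hy))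
        simpa using hab.trans_le hbx'
      obtain ⟨a₀, ha₀, haa₀⟩ := iha ha (hxT.resolve_right hxb) hmaxa hax
      refine ⟨node [a₀, b], canonical_pair.2 ⟨?_, ha₀, hb⟩, by simp [grafts, haa₀]⟩
      rwa [← hmin ha₀ haa₀ hmaxa]
  | case3 ts _ => simp [Canonical] at hT

open Classical in
noncomputable def prune (x : ℕ) : PTree → PTree
  | node [a, b] => if b = leaf x then a else if a = leaf x then b else node [prune x a, prune x b]
  | T => T

theorem prune_of_notMem {x : ℕ} {T : PTree} (hx : x ∉ T.leaves) : prune x T = T := by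
  induction T using prune.induct x with
  | case1 a => simp at hx
  | case2 b _ => simp at hx
  | case3 a b hb ha iha ihb =>
    simp only [leaves_pair, List.mem_append, not_or] at hx
    rw [prune, if_neg hb, if_neg ha, iha hx.1, ihb hx.2]
  | case4 T hpair => rw [prune.eq_2 x T hpair]

theorem prune_of_mem_grafts {x : ℕ} {T T' : PTree} (hx : x ∉ T.leaves) (h : T' ∈ grafts x T) :
    prune x T' = T := by
  induction T using grafts.induct generalizing T' with
  | case1 a b iha ihb =>
    simp only [leaves_pair, List.mem_append, not_or] at hx
    obtain ⟨hxa, hxb⟩ := hx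
    have hbx : b ≠ leaf x := by rintro rfl; simp at hxb
    have hax : a ≠ leaf x := by rintro rfl; simp at hxa
    simp only [grafts, List.mem_cons, List.mem_append, List.mem_map] at h
    rcases h with rfl | ⟨a', ha', rfl⟩ | ⟨b', hb', rfl⟩
    · simp [prune]
    · obtain ⟨c, d, rfl⟩ := exists_eq_node_of_mem_grafts ha'
      rw [prune, if_neg hbx, if_neg (by simp), iha hxa ha', prune_of_notMem hxb]
    · obtain ⟨c, d, rfl⟩ := exists_eq_node_of_mem_grafts hb'
      rw [prune, if_neg (by simp), if_neg hax, ihb hxb hb', prune_of_notMem hxa]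
  | case2 T hpair =>
    rw [grafts.eq_2 x T hpair, List.mem_singleton] at h
    simp [h, prune]

def forestGrafts (x : ℕ) : List PTree → List (List PTree)
  | [] => []
  | T :: F => (grafts x T).map (· :: F) ++ (forestGrafts x F).map (T :: ·)

theorem mem_forestGrafts {x : ℕ} {F F' : List PTree} :
    F' ∈ forestGrafts x F ↔ ∃ A T B T', F = A ++ T :: B ∧ T' ∈ grafts x T ∧ F' = A ++ T' :: B := by
  induction F generalizing F' with
  | nil => simp [forestGrafts]
  | cons T F ih =>
    simp only [forestGrafts, List.mem_append, List.mem_map, ih]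
    constructor
    · rintro (⟨T', hT', rfl⟩ | ⟨_, ⟨A, U, B, U', rfl, hU', rfl⟩, rfl⟩)
      · exact ⟨[], T, F, T', rfl, hT', rfl⟩
      · exact ⟨T :: A, U, B, U', rfl, hU', rfl⟩
    · rintro ⟨_ | ⟨V, A⟩, U, B, U', h, hU', rfl⟩
      · obtain ⟨rfl, rfl⟩ := List.cons_eq_cons.1 h
        exact .inl ⟨U', hU', rfl⟩
      · obtain ⟨rfl, rfl⟩ := List.cons_eq_cons.1 h
        exact .inr ⟨A ++ U' :: B, ⟨A, U, B, U', rfl, hU', rfl⟩, rfl⟩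

theorem flatMap_leaves_perm_of_mem_forestGrafts {x : ℕ} {F F' : List PTree}
    (h : F' ∈ forestGrafts x F) : (F'.flatMap leaves).Perm (x :: F.flatMap leaves) := by
  obtain ⟨A, T, B, T', rfl, hT', rfl⟩ := mem_forestGrafts.1 h
  simp only [List.flatMap_append, List.flatMap_cons]
  exact (((leaves_perm_of_mem_grafts hT').append_right _).append_left _).trans List.perm_middle

theorem flatMap_leaves_perm_of_mem_permutations'Aux {x : ℕ} {F F' : List PTree}
    (h : F' ∈ F.permutations'Aux (leaf x)) : (F'.flatMap leaves).Perm (x :: F.flatMap leaves) := by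
  obtain ⟨A, B, rfl, rfl⟩ := List.mem_permutations'Aux_iff.1 h
  simp

theorem length_forestGrafts (x : ℕ) {F : List PTree} (hF : ∀ T ∈ F, IsBinary T) :
    (forestGrafts x F).length + F.length = 2 * (F.flatMap leaves).length := by
  induction F with
  | nil => simp [forestGrafts]
  | cons T F ih =>
    have hT := length_grafts x (hF T List.mem_cons_self)
    have := ih fun U hU => hF U (List.mem_cons_of_mem T hU)
    simp only [forestGrafts, List.length_append, List.length_map, List.length_cons,
      List.flatMap_cons]
    omega

theorem nodup_forestGrafts {x : ℕ} {F : List PTree} (hx : x ∉ F.flatMap leaves) :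
    (forestGrafts x F).Nodup := by
  induction F with
  | nil => simp [forestGrafts]
  | cons T F ih =>
    simp only [List.flatMap_cons, List.mem_append, not_or] at hx
    rw [forestGrafts, List.nodup_append]
    refine ⟨(nodup_grafts hx.1).map fun _ _ h => by simpa using h,
      (ih hx.2).map fun _ _ h => by simpa using h, ?_⟩
    simp only [List.mem_map]
    rintro _ ⟨T', hT', rfl⟩ _ ⟨G, -, rfl⟩ h
    simp only [List.cons.injEq] at h
    exact hx.1 (h.1 ▸ (leaves_perm_of_mem_grafts hT').mem_iff.2 List.mem_cons_self)

theorem map_prune_of_mem_forestGrafts {x : ℕ} {F F' : List PTree} (hx : x ∉ F.flatMap leaves)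
    (h : F' ∈ forestGrafts x F) : F'.map (prune x) = F := by
  obtain ⟨A, T, B, T', rfl, hT', rfl⟩ := mem_forestGrafts.1 h
  simp only [List.flatMap_append, List.flatMap_cons, List.mem_append, List.mem_flatMap,
    not_or, not_exists, not_and] at hx
  obtain ⟨hA, hT, hB⟩ := hx
  rw [List.map_append, List.map_cons, prune_of_mem_grafts hT hT',
    List.map_congr_left fun U hU => prune_of_notMem (hA U hU),
    List.map_congr_left fun U hU => prune_of_notMem (hB U hU), List.map_id', List.map_id']

structure IsCanonicalForest (n m : ℕ) (F : List PTree) : Prop where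
  length_eq : F.length = m
  canonical : ∀ T ∈ F, Canonical T
  perm : (F.flatMap leaves).Perm (List.range' 1 n)

theorem isCanonicalForest_iff {n m : ℕ} {F : List PTree} :
    (F.length = m ∧ (∀ T ∈ F, IsBinary T ∧ Canonical T ∧ T.leaves ≠ []) ∧
      (F.flatMap leaves).Nodup ∧ (F.flatMap leaves).toFinset = Finset.Icc 1 n) ↔
    IsCanonicalForest n m F := by
  rw [List.nodup_and_toFinset_eq_Icc_iff]
  exact ⟨fun ⟨hlen, hF, hperm⟩ => ⟨hlen, fun T hT => (hF T hT).2.1, hperm⟩,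
    fun hF => ⟨hF.length_eq, fun T hT => ⟨(hF.canonical T hT).isBinary, hF.canonical T hT,
      (hF.canonical T hT).leaves_ne_nil⟩, hF.perm⟩⟩

namespace IsCanonicalForest

variable {n m : ℕ} {F₀ F : List PTree}

theorem lt_of_mem_leaves (hF : IsCanonicalForest n m F) {T : PTree} (hT : T ∈ F) {y : ℕ}
    (hy : y ∈ T.leaves) : y < n + 1 := by
  have := List.mem_range'_1.1 (hF.perm.mem_iff.1 (List.mem_flatMap.2 ⟨T, hT, hy⟩))
  omega

theorem succ_notMem_flatMap_leaves (hF : IsCanonicalForest n m F) :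
    n + 1 ∉ F.flatMap leaves := fun h => by
  obtain ⟨T, hT, hy⟩ := List.mem_flatMap.1 h
  exact lt_irrefl _ (hF.lt_of_mem_leaves hT hy)

theorem leaf_succ_notMem (hF : IsCanonicalForest n m F) : leaf (n + 1) ∉ F := fun h =>
  hF.succ_notMem_flatMap_leaves (List.mem_flatMap.2 ⟨_, h, by simp⟩)

theorem of_mem_forestGrafts (hF₀ : IsCanonicalForest n m F₀) (h : F ∈ forestGrafts (n + 1) F₀) :
    IsCanonicalForest (n + 1) m F := by
  have hperm := flatMap_leaves_perm_of_mem_forestGrafts h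
  obtain ⟨A, T, B, T', rfl, hT', rfl⟩ := mem_forestGrafts.1 h
  have hcan := hF₀.canonical
  simp only [List.forall_mem_append, List.forall_mem_cons] at hcan
  refine ⟨by simpa using hF₀.length_eq, ?_, (List.perm_range'_succ_iff hperm).2 hF₀.perm⟩
  simp only [List.forall_mem_append, List.forall_mem_cons]
  exact ⟨hcan.1, canonical_of_mem_grafts hT' hcan.2.1 fun y hy =>
    hF₀.lt_of_mem_leaves (by simp) hy, hcan.2.2⟩

theorem of_mem_permutations'Aux (hF₀ : IsCanonicalForest n m F₀)
    (h : F ∈ F₀.permutations'Aux (leaf (n + 1))) : IsCanonicalForest (n + 1) (m + 1) F := by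
  have hperm := flatMap_leaves_perm_of_mem_permutations'Aux h
  obtain ⟨A, B, rfl, rfl⟩ := List.mem_permutations'Aux_iff.1 h
  have hcan := hF₀.canonical
  simp only [List.forall_mem_append] at hcan
  refine ⟨?_, ?_, (List.perm_range'_succ_iff hperm).2 hF₀.perm⟩
  · simp [← hF₀.length_eq]
    omega
  · simp only [List.forall_mem_append, List.forall_mem_cons]
    exact ⟨hcan.1, canonical_leaf _, hcan.2⟩

theorem exists_of_succ (hF : IsCanonicalForest (n + 1) (m + 1) F) :
    (∃ F₀, IsCanonicalForest n (m + 1) F₀ ∧ F ∈ forestGrafts (n + 1) F₀) ∨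
      ∃ F₀, IsCanonicalForest n m F₀ ∧ F ∈ F₀.permutations'Aux (leaf (n + 1)) := by
  have hx : n + 1 ∈ F.flatMap leaves :=
    hF.perm.mem_iff.2 (List.mem_range'_1.2 ⟨by omega, by omega⟩)
  obtain ⟨T, hTF, hxT⟩ := List.mem_flatMap.1 hx
  obtain ⟨A, B, rfl⟩ := List.append_of_mem hTF
  have hlen := hF.length_eq
  have hcan := hF.canonical
  simp only [List.length_append, List.length_cons] at hlen
  simp only [List.forall_mem_append, List.forall_mem_cons] at hcan
  by_cases hTx : T = leaf (n + 1)
  · subst hTx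
    have hmem : A ++ leaf (n + 1) :: B ∈ (A ++ B).permutations'Aux (leaf (n + 1)) :=
      List.mem_permutations'Aux_iff.2 ⟨A, B, rfl, rfl⟩
    refine .inr ⟨A ++ B, ⟨by simp; omega, ?_, ?_⟩, hmem⟩
    · simpa only [List.forall_mem_append] using ⟨hcan.1, hcan.2.2⟩
    · exact (List.perm_range'_succ_iff (flatMap_leaves_perm_of_mem_permutations'Aux hmem)).1 hF.perm
  · obtain ⟨T₀, hT₀, hTT₀⟩ := hcan.2.1.exists_canonical_mem_grafts hxT
      (fun y hy => Nat.le_of_lt_succ (hF.lt_of_mem_leaves hTF hy)) hTx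
    have hmem : A ++ T :: B ∈ forestGrafts (n + 1) (A ++ T₀ :: B) :=
      mem_forestGrafts.2 ⟨A, T₀, B, T, rfl, hTT₀, rfl⟩
    refine .inl ⟨A ++ T₀ :: B, ⟨by simp; omega, ?_, ?_⟩, hmem⟩
    · simp only [List.forall_mem_append, List.forall_mem_cons]
      exact ⟨hcan.1, hT₀, hcan.2.2⟩
    · exact (List.perm_range'_succ_iff (flatMap_leaves_perm_of_mem_forestGrafts hmem)).1 hF.perm

end IsCanonicalForest

def canonicalForests : ℕ → ℕ → List (List PTree)
  | 0, 0 => [[]]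
  | 0, _ + 1 => []
  | _ + 1, 0 => []
  | n + 1, m + 1 =>
      (canonicalForests n (m + 1)).flatMap (forestGrafts (n + 1)) ++
        (canonicalForests n m).flatMap (List.permutations'Aux (leaf (n + 1)))

theorem mem_canonicalForests {n m : ℕ} {F : List PTree} :
    F ∈ canonicalForests n m ↔ IsCanonicalForest n m F := by
  induction n generalizing m F with
  | zero =>
    have hnil : IsCanonicalForest 0 m F → F = [] := fun hF =>
      List.eq_nil_iff_forall_not_mem.2 fun T hT => by
        obtain ⟨y, hy⟩ := List.exists_mem_of_ne_nil _ (hF.canonical T hT).leaves_ne_nil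
        simpa using hF.perm.mem_iff.1 (List.mem_flatMap.2 ⟨T, hT, hy⟩)
    cases m with
    | zero =>
      simp only [canonicalForests, List.mem_singleton]
      exact ⟨by rintro rfl; exact ⟨rfl, by simp, by simp⟩, hnil⟩
    | succ m =>
      simp only [canonicalForests, List.not_mem_nil, false_iff]
      intro hF
      simpa [hnil hF] using hF.length_eq
  | succ n ih =>
    cases m with
    | zero =>
      simp only [canonicalForests, List.not_mem_nil, false_iff]
      rintro ⟨hlen, -, hperm⟩
      simpa [List.length_eq_zero_iff.1 hlen] using hperm.length_eq
    | succ m =>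
      simp only [canonicalForests, List.mem_append, List.mem_flatMap, ih]
      refine ⟨?_, IsCanonicalForest.exists_of_succ⟩
      rintro (⟨F₀, hF₀, h⟩ | ⟨F₀, hF₀, h⟩)
      exacts [hF₀.of_mem_forestGrafts h, hF₀.of_mem_permutations'Aux h]

theorem nodup_canonicalForests (n m : ℕ) : (canonicalForests n m).Nodup := by
  classical
  induction n generalizing m with
  | zero => cases m <;> simp [canonicalForests]
  | succ n ih =>
    cases m with
    | zero => simp [canonicalForests]
    | succ m =>
      rw [canonicalForests, List.nodup_append]
      refine ⟨?_, ?_, ?_⟩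
      · refine List.nodup_flatMap_of_leftInverse (List.map (prune (n + 1))) (ih _)
          (fun F₀ h => nodup_forestGrafts (mem_canonicalForests.1 h).succ_notMem_flatMap_leaves)
          fun F₀ h F hF => map_prune_of_mem_forestGrafts
            (mem_canonicalForests.1 h).succ_notMem_flatMap_leaves hF
      · refine List.nodup_flatMap_of_leftInverse (fun F => F.erase (leaf (n + 1))) (ih _)
          (fun F₀ h => List.nodup_permutations'Aux_of_notMem _ _
            (mem_canonicalForests.1 h).leaf_succ_notMem)
          fun F₀ h F hF => List.erase_of_mem_permutations'Aux
            (mem_canonicalForests.1 h).leaf_succ_notMem hF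
      · simp only [List.mem_flatMap]
        rintro F ⟨F₀, h₀, hF⟩ _ ⟨F₁, -, hF'⟩ rfl
        obtain ⟨A, B, -, rfl⟩ := List.mem_permutations'Aux_iff.1 hF'
        have hF₀ := mem_canonicalForests.1 h₀
        -- `prune` fixes `leaf (n + 1)`, which would then lie in `F₀`
        refine hF₀.leaf_succ_notMem ?_
        rw [← map_prune_of_mem_forestGrafts hF₀.succ_notMem_flatMap_leaves hF]
        exact List.mem_map.2 ⟨leaf (n + 1), by simp, by simp [prune]⟩

theorem canonicalForests_eq_nil {n m : ℕ} (h : n < m) : canonicalForests n m = [] := by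
  induction n generalizing m with
  | zero => cases m <;> first | omega | rfl
  | succ n ih =>
    cases m with
    | zero => omega
    | succ m => rw [canonicalForests, ih (by omega), ih (by omega)]; rfl

theorem length_canonicalForests_succ_succ (n m : ℕ) :
    (canonicalForests (n + 1) (m + 1)).length =
      (canonicalForests n (m + 1)).length * (2 * n - (m + 1)) +
        (canonicalForests n m).length * (m + 1) := by
  have hgrafts : ∀ F₀ ∈ canonicalForests n (m + 1),
      (forestGrafts (n + 1) F₀).length = 2 * n - (m + 1) := fun F₀ h => by
    have hF₀ := mem_canonicalForests.1 h
    have := length_forestGrafts (n + 1) fun T hT => (hF₀.canonical T hT).isBinary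
    rw [hF₀.length_eq, hF₀.perm.length_eq, List.length_range'] at this
    omega
  have hinsertions : ∀ F₀ ∈ canonicalForests n m,
      (F₀.permutations'Aux (leaf (n + 1))).length = m + 1 := fun F₀ h => by
    rw [List.length_permutations'Aux, (mem_canonicalForests.1 h).length_eq]
  rw [canonicalForests, List.length_append, List.length_flatMap, List.length_flatMap,
    List.map_congr_left hgrafts, List.map_congr_left hinsertions, List.map_const',
    List.map_const', List.sum_replicate, List.sum_replicate, smul_eq_mul, smul_eq_mul]

theorem length_canonicalForests_mul_factorial_mul_two_pow (m a : ℕ) :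
    (canonicalForests (m + a + 1) (m + 1)).length * (a.factorial * 2 ^ a) =
      (m + 2 * a).factorial * (m + 1) := by
  refine mul_factorial_mul_two_pow_eq_of_recurrence
    (fun m a => (canonicalForests (m + a + 1) (m + 1)).length) rfl
    (fun a => ?_) (fun m => ?_) (fun m a => ?_) m a
  · have h := length_canonicalForests_succ_succ (a + 1) 0
    rw [canonicalForests, List.length_nil, zero_mul, add_zero,
      show 2 * (a + 1) - (0 + 1) = 2 * a + 1 by omega] at h
    simpa using h
  · have h := length_canonicalForests_succ_succ (m + 1) (m + 1)
    rw [canonicalForests_eq_nil (Nat.lt_succ_self (m + 1)), List.length_nil, zero_mul,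
      zero_add] at h
    simpa using h
  · have h := length_canonicalForests_succ_succ (m + a + 2) (m + 1)
    rw [show 2 * (m + a + 2) - (m + 1 + 1) = m + 2 * a + 2 by omega] at h
    rw [show m + 1 + (a + 1) + 1 = m + a + 2 + 1 by omega, show m + 1 + a + 1 = m + a + 2 by omega,
      show m + (a + 1) + 1 = m + a + 2 by omega]
    exact h

end PTree

theorem card_binary_forests (n m : ℕ) (h1 : 1 ≤ m) (hmn : m ≤ n) :
    {F : List PTree | F.length = m ∧
        (∀ T ∈ F, PTree.IsBinary T ∧ PTree.Canonical T ∧ T.leaves ≠ []) ∧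
        (F.flatMap PTree.leaves).Nodup ∧
        (F.flatMap PTree.leaves).toFinset = Finset.Icc 1 n}.ncard *
      ((n - m).factorial * 2 ^ (n - m)) =
    (2 * n - m - 1).factorial * m := by
  classical
  simp only [PTree.isCanonicalForest_iff, ← PTree.mem_canonicalForests]
  rw [← List.coe_toFinset, Set.ncard_coe_finset,
    List.toFinset_card_of_nodup (PTree.nodup_canonicalForests n m)]
  obtain ⟨k, rfl⟩ : ∃ k, m = k + 1 := ⟨m - 1, by omega⟩
  obtain ⟨a, rfl⟩ : ∃ a, n = k + a + 1 := ⟨n - k - 1, by omega⟩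
  rw [show k + a + 1 - (k + 1) = a by omega,
    show 2 * (k + a + 1) - (k + 1) - 1 = k + 2 * a by omega]
  exact PTree.length_canonicalForests_mul_factorial_mul_two_pow k a
end
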